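/- Let x ∈ ℝⁿ, d ∈ [0, 1], ε > 0, and let D = B_ε(0) ∩ {y_n < ε d} (a ball cut by a horizontal hyperplane). Then the second-moment matrix satisfies ⨍_D y ⊗ y dy = (ε²/(n+2)) Iₙ + E, where the error matrix E satisfies ‖E‖ ≤ C(n) ε s_ε with s_ε = (|B₁^{n-1}|/((n+1)|B_{1,d}^n|)) ε (1 - d²)^{(n+1)/2}. -/

import Mathlib

open MeasureTheory

open MeasureTheory Metric Set
open scoped Pointwise

noncomputable section
namespace SMCB

variable {n : ℕ}

lemma contApp (i : Fin n) : Continuous fun y : EuclideanSpace ℝ (Fin n) => y i :=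
  (continuous_apply i).comp (PiLp.continuous_ofLp 2 _)

lemma integrableOn_ball {ε : ℝ} {f : EuclideanSpace ℝ (Fin n) → ℝ} (hf : Continuous f)
    {s : Set (EuclideanSpace ℝ (Fin n))} (hs : s ⊆ closedBall 0 ε) :
    IntegrableOn f s :=
  (hf.continuousOn.integrableOn_compact (isCompact_closedBall _ _)).mono_set hs

lemma msq_perm (ε : ℝ) (i j : Fin n) :
    ∫ y in ball (0 : EuclideanSpace ℝ (Fin n)) ε, y j ^ 2
      = ∫ y in ball (0 : EuclideanSpace ℝ (Fin n)) ε, y i ^ 2 := by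
  set f := LinearIsometryEquiv.piLpCongrLeft 2 ℝ ℝ (Equiv.swap i j) with hf
  have hpre : f ⁻¹' ball 0 ε = ball 0 ε := by
    ext x
    simp only [Set.mem_preimage, mem_ball, dist_zero_right, f.norm_map]
  have happ : ∀ x : EuclideanSpace ℝ (Fin n), f x i = x j := by
    intro x
    rw [hf, LinearIsometryEquiv.piLpCongrLeft_apply]
    simp only [Equiv.piCongrLeft'_apply, Equiv.symm_swap]
    exact congrArg x (Equiv.swap_apply_left i j)
  calc ∫ y in ball (0 : EuclideanSpace ℝ (Fin n)) ε, y j ^ 2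
      = ∫ y in f ⁻¹' ball 0 ε, (f y) i ^ 2 := by
        rw [hpre]; exact setIntegral_congr_fun measurableSet_ball fun y _ => by rw [happ]
    _ = ∫ y in ball (0 : EuclideanSpace ℝ (Fin n)) ε, y i ^ 2 :=
        f.measurePreserving.setIntegral_preimage_emb
          f.toHomeomorph.measurableEmbedding (fun y => y i ^ 2) _

end SMCB

namespace SMCB
open scoped ENNReal

lemma norm_sq_eq (y : EuclideanSpace ℝ (Fin n)) : ‖y‖ ^ 2 = ∑ j, y j ^ 2 := by
  rw [EuclideanSpace.norm_eq, Real.sq_sqrt (by positivity)]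
  simp [sq_abs]

lemma msq (ε : ℝ) (hε : 0 < ε) (i : Fin n) :
    ∫ y in ball (0 : EuclideanSpace ℝ (Fin n)) ε, y i ^ 2
      = (volume (ball (0 : EuclideanSpace ℝ (Fin n)) ε)).toReal * ε ^ 2 / (n + 2) := by
  have hn : 0 < n := i.pos
  haveI : Nontrivial (EuclideanSpace ℝ (Fin n)) :=
    ⟨EuclideanSpace.single i 1, 0, by
      intro h
      have := congrArg (fun z : EuclideanSpace ℝ (Fin n) => z i) h
      simpa using this⟩
  have dimE : Module.finrank ℝ (EuclideanSpace ℝ (Fin n)) = n := finrank_euclideanSpace_fin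
  -- polar computation of ∫ ‖y‖²
  set g : ℝ → ℝ := (Set.Ioo (0:ℝ) ε).indicator (fun r => r ^ 2) with hg
  have h1 := integral_fun_norm_addHaar (volume : Measure (EuclideanSpace ℝ (Fin n))) g
  have hmem : ∀ x : EuclideanSpace ℝ (Fin n),
      (‖x‖ ∈ Set.Ioo (0:ℝ) ε) ↔ x ∈ ball (0 : EuclideanSpace ℝ (Fin n)) ε \ {0} := by
    intro x
    simp only [Set.mem_Ioo, mem_diff, mem_ball, dist_zero_right, mem_singleton_iff,
      norm_pos_iff]
    tauto
  have hLHS : ∫ x : EuclideanSpace ℝ (Fin n), g ‖x‖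
      = ∫ x in ball (0 : EuclideanSpace ℝ (Fin n)) ε, ‖x‖ ^ 2 := by
    have : (fun x : EuclideanSpace ℝ (Fin n) => g ‖x‖)
        = (ball (0 : EuclideanSpace ℝ (Fin n)) ε \ {0}).indicator (fun x => ‖x‖ ^ 2) := by
      funext x
      by_cases hx : x ∈ ball (0 : EuclideanSpace ℝ (Fin n)) ε \ {0}
      · rw [Set.indicator_of_mem hx, hg, Set.indicator_of_mem ((hmem x).2 hx)]
      · rw [Set.indicator_of_notMem hx, hg,
          Set.indicator_of_notMem (fun h => hx ((hmem x).1 h))]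
    rw [this, integral_indicator (measurableSet_ball.diff (measurableSet_singleton 0))]
    refine setIntegral_congr_set ?_
    refine Filter.EventuallyEq.trans (MeasureTheory.diff_ae_eq_self.2 ?_) Filter.EventuallyEq.rfl
    exact measure_mono_null Set.inter_subset_right (measure_singleton _)
  have hR1 : ∀ y : ℝ, y ^ (Module.finrank ℝ (EuclideanSpace ℝ (Fin n)) - 1) • g y
      = (Set.Ioo (0:ℝ) ε).indicator (fun r => r ^ (n + 1)) y := by
    intro y
    rw [dimE, hg]
    by_cases hy : y ∈ Set.Ioo (0:ℝ) ε
    · rw [Set.indicator_of_mem hy, Set.indicator_of_mem hy, smul_eq_mul, ← pow_add]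
      congr 1
      omega
    · rw [Set.indicator_of_notMem hy, Set.indicator_of_notMem hy, smul_zero]
  have hR2 : ∫ y in Set.Ioi (0:ℝ), y ^ (Module.finrank ℝ (EuclideanSpace ℝ (Fin n)) - 1) • g y
      = ε ^ (n + 2) / (n + 2) := by
    simp only [hR1]
    rw [setIntegral_indicator measurableSet_Ioo,
      Set.inter_eq_self_of_subset_right Set.Ioo_subset_Ioi_self,
      ← MeasureTheory.integral_Ioc_eq_integral_Ioo,
      ← intervalIntegral.integral_of_le hε.le, integral_pow]
    rw [show n + 1 + 1 = n + 2 from rfl]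
    push_cast
    ring
  have hball : ∫ x in ball (0 : EuclideanSpace ℝ (Fin n)) ε, ‖x‖ ^ 2
      = n * (volume (ball (0 : EuclideanSpace ℝ (Fin n)) 1)).toReal * (ε ^ (n + 2) / (n + 2)) := by
    rw [← hLHS, h1, hR2, dimE, nsmul_eq_mul, smul_eq_mul, mul_assoc, measureReal_def]
  have hsum : ∫ x in ball (0 : EuclideanSpace ℝ (Fin n)) ε, ‖x‖ ^ 2
      = n * ∫ y in ball (0 : EuclideanSpace ℝ (Fin n)) ε, y i ^ 2 := by
    rw [setIntegral_congr_fun measurableSet_ball (fun y _ => norm_sq_eq y),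
      integral_finset_sum _ (μ := volume.restrict (ball (0 : EuclideanSpace ℝ (Fin n)) ε))
        (f := fun j (y : EuclideanSpace ℝ (Fin n)) => y j ^ 2) (fun j _ =>
        integrableOn_ball (ε := ε) (f := fun y => y j ^ 2) ((contApp j).pow 2) ball_subset_closedBall)]
    simp only [fun j => msq_perm ε i j]
    rw [Finset.sum_const, Finset.card_univ, Fintype.card_fin, nsmul_eq_mul]
  have hv : (volume (ball (0 : EuclideanSpace ℝ (Fin n)) ε)).toReal
      = ε ^ n * (volume (ball (0 : EuclideanSpace ℝ (Fin n)) 1)).toReal := by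
    rw [Measure.addHaar_ball _ _ hε.le, dimE, ENNReal.toReal_mul,
      ENNReal.toReal_ofReal (by positivity)]
  have hn' : (n : ℝ) ≠ 0 := Nat.cast_ne_zero.2 hn.ne'
  have hX : (∫ y in ball (0 : EuclideanSpace ℝ (Fin n)) ε, y i ^ 2)
      = (volume (ball (0 : EuclideanSpace ℝ (Fin n)) 1)).toReal * ε ^ (n + 2) / (n + 2) := by
    refine mul_left_cancel₀ hn' ?_
    rw [← hsum, hball]
    ring
  rw [hX, hv, pow_add]
  ring

end SMCB

namespace SMCB

lemma offdiag_zero (ε a : ℝ) (N i j : Fin n) (hij : i ≠ j)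
    (hD : MeasurableSet {y : EuclideanSpace ℝ (Fin n) | y ∈ ball 0 ε ∧ y N < a}) :
    ∫ y in {y : EuclideanSpace ℝ (Fin n) | y ∈ ball 0 ε ∧ y N < a}, y i * y j = 0 := by
  classical
  set D : Set (EuclideanSpace ℝ (Fin n)) := {y | y ∈ ball 0 ε ∧ y N < a} with hDdef
  set k : Fin n := if i = N then j else i with hk
  have hkN : k ≠ N := by
    rw [hk]; split
    · rename_i h; rw [← h]; exact hij.symm
    · assumption
  have hkij : (k = i ∧ j ≠ k) ∨ (k = j ∧ i ≠ k) := by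
    rw [hk]; split
    · exact Or.inr ⟨rfl, fun h => (by simp_all)⟩
    · exact Or.inl ⟨rfl, fun h => hij (by simp_all)⟩
  set R := LinearIsometryEquiv.piLpCongrRight 2
    (fun l : Fin n => if l = k then LinearIsometryEquiv.neg ℝ (E := ℝ)
      else LinearIsometryEquiv.refl ℝ ℝ) with hR
  have hRapp : ∀ (x : EuclideanSpace ℝ (Fin n)) (l : Fin n),
      R x l = if l = k then -(x l) else x l := by
    intro x l
    rw [hR, LinearIsometryEquiv.piLpCongrRight_apply]
    by_cases h : l = k
    · subst h; simp
    · simp [h]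
  have hpre : R ⁻¹' D = D := by
    ext x
    simp only [Set.mem_preimage, hDdef, Set.mem_setOf_eq, mem_ball, dist_zero_right,
      R.norm_map]
    rw [hRapp x N, if_neg (fun h : N = k => hkN h.symm)]
  have hneg : ∀ x : EuclideanSpace ℝ (Fin n), (R x) i * (R x) j = -(x i * x j) := by
    intro x
    rw [hRapp x i, hRapp x j]
    rcases hkij with ⟨h1, h2⟩ | ⟨h1, h2⟩
    · rw [if_pos h1.symm, if_neg h2]; ring
    · rw [if_pos h1.symm, if_neg h2]; ring
  have hint : ∫ y in D, y i * y j = ∫ x in D, -(x i * x j) := by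
    have h := R.measurePreserving.setIntegral_preimage_emb R.toHomeomorph.measurableEmbedding
      (fun z : EuclideanSpace ℝ (Fin n) => z i * z j) D
    rw [hpre] at h
    rw [← h]
    exact setIntegral_congr_fun hD fun x _ => hneg x
  rw [integral_neg] at hint
  linarith [hint]

end SMCB

namespace SMCB

lemma abs_coord_le_norm (y : EuclideanSpace ℝ (Fin n)) (l : Fin n) : |y l| ≤ ‖y‖ := by
  have h1 : y l ^ 2 ≤ ‖y‖ ^ 2 := by
    rw [norm_sq_eq]
    exact Finset.single_le_sum (f := fun j => y j ^ 2) (fun j _ => sq_nonneg _)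
      (Finset.mem_univ l)
  calc |y l| = Real.sqrt (y l ^ 2) := (Real.sqrt_sq_eq_abs _).symm
    _ ≤ Real.sqrt (‖y‖ ^ 2) := Real.sqrt_le_sqrt h1
    _ = ‖y‖ := Real.sqrt_sq (norm_nonneg y)

lemma cap_volume (m : ℕ) (hm : 0 < m) (ε d : ℝ) (hε : 0 < ε) (hd0 : 0 ≤ d) (hd1 : d ≤ 1) :
    volume {y : EuclideanSpace ℝ (Fin (m + 1)) | y ∈ ball 0 ε ∧ ¬ y (Fin.last m) < ε * d}
      ≤ ENNReal.ofReal ((volume (ball (0 : EuclideanSpace ℝ (Fin m)) 1)).toReal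
          * ε ^ (m + 1) * (1 - d ^ 2) ^ (((m : ℝ) + 2) / 2)) := by
  classical
  set r : ℝ := ε * Real.sqrt (1 - d ^ 2) with hr
  have hr0 : 0 ≤ r := by positivity
  have h1d : 0 ≤ 1 - d ^ 2 := by nlinarith
  set κm : ℝ := (volume (ball (0 : EuclideanSpace ℝ (Fin m)) 1)).toReal with hκm
  have hκ0 : 0 ≤ κm := ENNReal.toReal_nonneg
  set φ := (MeasurableEquiv.toLp 2 (Fin (m + 1) → ℝ)).symm with hφ
  set ψ := MeasurableEquiv.piFinSuccAbove (fun _ : Fin (m + 1) => ℝ) (Fin.last m) with hψ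
  set φ' := (MeasurableEquiv.toLp 2 (Fin m → ℝ)).symm with hφ'
  set B' : Set (Fin m → ℝ) := φ'.symm ⁻¹' (Metric.closedBall 0 r) with hB'
  set T : Set (ℝ × (Fin m → ℝ)) := Set.Icc (ε * d) ε ×ˢ B' with hT
  have hTm : MeasurableSet T :=
    (measurableSet_Icc).prod (φ'.symm.measurable measurableSet_closedBall)
  -- containment
  have hsub : {y : EuclideanSpace ℝ (Fin (m + 1)) | y ∈ ball 0 ε ∧ ¬ y (Fin.last m) < ε * d}
      ⊆ φ ⁻¹' (ψ ⁻¹' T) := by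
    intro y hy
    obtain ⟨hy1, hy2⟩ := hy
    rw [mem_ball, dist_zero_right] at hy1
    push_neg at hy2
    have happ : ψ (φ y) = (y (Fin.last m), fun j => y ((Fin.last m).succAbove j)) := rfl
    simp only [Set.mem_preimage, happ, hT, Set.mem_prod]
    constructor
    · exact ⟨hy2, le_trans (le_trans (le_abs_self _) (abs_coord_le_norm y _)) hy1.le⟩
    · -- second component in B'
      rw [hB', Set.mem_preimage, Metric.mem_closedBall, dist_zero_right]
      set z : EuclideanSpace ℝ (Fin m) :=
        φ'.symm (fun j => y ((Fin.last m).succAbove j)) with hz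
      have hzapp : ∀ j, z j = y ((Fin.last m).succAbove j) := fun j => rfl
      have hsq : ‖z‖ ^ 2 ≤ r ^ 2 := by
        rw [norm_sq_eq]
        have hsplit : ∑ l, y l ^ 2 = (∑ j : Fin m, y (Fin.castSucc j) ^ 2)
            + y (Fin.last m) ^ 2 := Fin.sum_univ_castSucc (fun l => y l ^ 2)
        have hy1' : ∑ l, y l ^ 2 < ε ^ 2 := by
          have := norm_sq_eq y
          nlinarith [norm_nonneg y]
        have hlast : (ε * d) ^ 2 ≤ y (Fin.last m) ^ 2 := by
          have h0 : 0 ≤ ε * d := by positivity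
          nlinarith
        have hzsum : ∑ j : Fin m, z j ^ 2 = ∑ j : Fin m, y (Fin.castSucc j) ^ 2 := by
          refine Finset.sum_congr rfl fun j _ => ?_
          rw [hzapp j, Fin.succAbove_last]
        rw [hzsum, hr]
        rw [mul_pow, Real.sq_sqrt h1d]
        nlinarith
      calc ‖z‖ = Real.sqrt (‖z‖ ^ 2) := (Real.sqrt_sq (norm_nonneg z)).symm
        _ ≤ Real.sqrt (r ^ 2) := Real.sqrt_le_sqrt hsq
        _ = r := Real.sqrt_sq hr0
  -- volume computation
  have hvol : volume (φ ⁻¹' (ψ ⁻¹' T)) = ENNReal.ofReal (ε - ε * d) * volume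
      (Metric.closedBall (0 : EuclideanSpace ℝ (Fin m)) r) := by
    rw [(EuclideanSpace.volume_preserving_symm_measurableEquiv_toLp (Fin (m + 1))).measure_preimage
      ((ψ.measurable hTm).nullMeasurableSet)]
    rw [(volume_preserving_piFinSuccAbove (fun _ : Fin (m + 1) => ℝ)
      (Fin.last m)).measure_preimage hTm.nullMeasurableSet]
    rw [hT, Measure.volume_eq_prod, Measure.prod_prod, Real.volume_Icc]
    congr 1
    exact ((EuclideanSpace.volume_preserving_symm_measurableEquiv_toLp (Fin m)).symm).measure_preimage
      measurableSet_closedBall.nullMeasurableSet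
  have hcb : volume (Metric.closedBall (0 : EuclideanSpace ℝ (Fin m)) r)
      ≤ ENNReal.ofReal (κm * r ^ m) := by
    haveI : Nontrivial (EuclideanSpace ℝ (Fin m)) :=
      ⟨EuclideanSpace.single ⟨0, hm⟩ 1, 0, by
        intro h
        have := congrArg (fun w : EuclideanSpace ℝ (Fin m) => w ⟨0, hm⟩) h
        simpa using this⟩
    rw [Measure.addHaar_closedBall_eq_addHaar_ball, Measure.addHaar_ball _ _ hr0,
      finrank_euclideanSpace_fin]
    rw [← ENNReal.ofReal_toReal (a := volume (ball (0 : EuclideanSpace ℝ (Fin m)) 1))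
      measure_ball_lt_top.ne, ← ENNReal.ofReal_mul (by positivity), ← hκm]
    rw [mul_comm]
  calc volume {y : EuclideanSpace ℝ (Fin (m + 1)) | y ∈ ball 0 ε ∧ ¬ y (Fin.last m) < ε * d}
      ≤ volume (φ ⁻¹' (ψ ⁻¹' T)) := measure_mono hsub
    _ = ENNReal.ofReal (ε - ε * d) * volume (Metric.closedBall (0 : EuclideanSpace ℝ (Fin m)) r)
        := hvol
    _ ≤ ENNReal.ofReal (ε - ε * d) * ENNReal.ofReal (κm * r ^ m) := by
        exact mul_le_mul_right hcb _
    _ ≤ ENNReal.ofReal (κm * ε ^ (m + 1) * (1 - d ^ 2) ^ (((m : ℝ) + 2) / 2)) := by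
        rw [← ENNReal.ofReal_mul (by nlinarith)]
        refine ENNReal.ofReal_le_ofReal ?_
        have hsq : (Real.sqrt (1 - d ^ 2)) ^ m = (1 - d ^ 2) ^ ((m : ℝ) / 2) := by
          rw [← Real.rpow_natCast (Real.sqrt (1 - d ^ 2)) m, Real.sqrt_eq_rpow,
            ← Real.rpow_mul h1d]
          congr 1
          ring
        rcases eq_or_lt_of_le hd1 with hd1' | hd1'
        · subst hd1'
          have h0 : ε - ε * 1 = 0 := by ring
          rw [h0, zero_mul]
          exact mul_nonneg (mul_nonneg hκ0 (by positivity)) (Real.rpow_nonneg h1d _)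
        · have h1d' : 0 < 1 - d ^ 2 := by nlinarith
          rw [show ((m : ℝ) + 2) / 2 = (m : ℝ) / 2 + 1 by ring, Real.rpow_add h1d',
            Real.rpow_one, hr, mul_pow, hsq]
          have h1 : 1 - d ≤ 1 - d ^ 2 := by nlinarith
          have hp : 0 ≤ (1 - d ^ 2) ^ ((m : ℝ) / 2) := Real.rpow_nonneg h1d _
          have hA : 0 ≤ κm * ε ^ m * (1 - d ^ 2) ^ ((m : ℝ) / 2) * ε := by positivity
          have key := mul_le_mul_of_nonneg_left h1 hA
          have hpow : ε ^ (m + 1) = ε ^ m * ε := pow_succ ε m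
          have e1 : (ε - ε * d) * (κm * (ε ^ m * (1 - d ^ 2) ^ ((m : ℝ) / 2)))
              = κm * ε ^ m * (1 - d ^ 2) ^ ((m : ℝ) / 2) * ε * (1 - d) := by ring
          have e2 : κm * ε ^ (m + 1) * ((1 - d ^ 2) ^ ((m : ℝ) / 2) * (1 - d ^ 2))
              = κm * ε ^ m * (1 - d ^ 2) ^ ((m : ℝ) / 2) * ε * (1 - d ^ 2) := by
            rw [hpow]; ring
          rw [e1, e2]
          exact key

end SMCB

end

open SMCB


theorem second_moment_cut_ball (n : ℕ) (hn : 2 ≤ n) :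
    let κ : ℝ := (volume (Metric.ball (0 : EuclideanSpace ℝ (Fin (n - 1))) 1)).toReal
    let vol2 : ℝ → ℝ := fun d =>
      (volume {y : EuclideanSpace ℝ (Fin n) |
        y ∈ Metric.ball 0 1 ∧ y ⟨n - 1, by omega⟩ < d}).toReal
    let sE : ℝ → ℝ → ℝ := fun ε d =>
      κ / ((n + 1) * vol2 d) * ε * (1 - d ^ 2) ^ (((n : ℝ) + 1) / 2)
    let D : ℝ → ℝ → Set (EuclideanSpace ℝ (Fin n)) := fun ε d =>
      {y | y ∈ Metric.ball (0 : EuclideanSpace ℝ (Fin n)) ε ∧ y ⟨n - 1, by omega⟩ < ε * d}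
    ∃ C > (0 : ℝ), ∀ ε > (0 : ℝ), ∀ d ∈ Set.Icc (0 : ℝ) 1, ∀ i j : Fin n,
      |(⨍ y in D ε d, y i * y j) - (if i = j then ε ^ 2 / (n + 2) else 0)|
        ≤ C * ε * sE ε d := by
  obtain ⟨m, rfl⟩ : ∃ m, n = m + 1 := ⟨n - 1, by omega⟩
  have hm : 0 < m := by omega
  intro κ vol2 sE D
  have hκ0 : 0 ≤ κ := ENNReal.toReal_nonneg
  set N : Fin (m + 1) := Fin.last m with hNdef
  refine ⟨2 * ((m : ℝ) + 2), by positivity, ?_⟩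
  intro ε hε d hd i j
  obtain ⟨hd0, hd1⟩ := hd
  have h1d : (0 : ℝ) ≤ 1 - d ^ 2 := by nlinarith
  have hDdef : D ε d
      = {y : EuclideanSpace ℝ (Fin (m + 1)) | y ∈ ball 0 ε ∧ y N < ε * d} := rfl
  set cap : Set (EuclideanSpace ℝ (Fin (m + 1)))
    := {y | y ∈ ball 0 ε ∧ ¬ y N < ε * d} with hcapdef
  have hDm : MeasurableSet (D ε d) := by
    have : D ε d = ball (0 : EuclideanSpace ℝ (Fin (m + 1))) ε
        ∩ (fun y : EuclideanSpace ℝ (Fin (m + 1)) => y N) ⁻¹' (Set.Iio (ε * d)) := rfl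
    rw [this]
    exact measurableSet_ball.inter ((contApp N).measurable measurableSet_Iio)
  have hcapm : MeasurableSet cap := by
    have : cap = ball (0 : EuclideanSpace ℝ (Fin (m + 1))) ε
        ∩ ((fun y : EuclideanSpace ℝ (Fin (m + 1)) => y N) ⁻¹' (Set.Iio (ε * d)))ᶜ := rfl
    rw [this]
    exact measurableSet_ball.inter ((contApp N).measurable measurableSet_Iio).compl
  have hdisj : Disjoint (D ε d) cap := by
    rw [Set.disjoint_left]
    intro y hy1 hy2
    exact hy2.2 hy1.2
  have hunion : D ε d ∪ cap = ball (0 : EuclideanSpace ℝ (Fin (m + 1))) ε := by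
    ext y
    constructor
    · rintro (h | h) <;> exact h.1
    · intro h
      by_cases hc : y N < ε * d
      · exact Or.inl ⟨h, hc⟩
      · exact Or.inr ⟨h, hc⟩
  have hDsub : D ε d ⊆ closedBall (0 : EuclideanSpace ℝ (Fin (m + 1))) ε :=
    fun y hy => ball_subset_closedBall hy.1
  have hcapsub : cap ⊆ closedBall (0 : EuclideanSpace ℝ (Fin (m + 1))) ε :=
    fun y hy => ball_subset_closedBall hy.1
  have hDfin : volume (D ε d) ≠ ⊤ :=
    ((measure_mono hDsub).trans_lt measure_closedBall_lt_top).ne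
  have hcapfin : volume cap ≠ ⊤ :=
    ((measure_mono hcapsub).trans_lt measure_closedBall_lt_top).ne
  -- scaling of D
  have hiff : ∀ y : EuclideanSpace ℝ (Fin (m + 1)), (ε⁻¹ • y ∈ D 1 d) ↔ y ∈ D ε d := by
    intro y
    have hsmN : (ε⁻¹ • y) N = ε⁻¹ * y N := rfl
    have hnrm : ‖ε⁻¹ • y‖ = ‖y‖ / ε := by
      rw [norm_smul, norm_inv, Real.norm_eq_abs, abs_of_pos hε]
      ring
    constructor
    · rintro ⟨h1, h2⟩
      rw [mem_ball, dist_zero_right, hnrm, div_lt_one hε] at h1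
      refine ⟨by rwa [mem_ball, dist_zero_right], ?_⟩
      have h2' : ε⁻¹ * y N < 1 * d := h2
      rw [one_mul] at h2'
      calc y N = ε * (ε⁻¹ * y N) := by
            rw [← mul_assoc, mul_inv_cancel₀ hε.ne', one_mul]
        _ < ε * d := mul_lt_mul_of_pos_left h2' hε
    · rintro ⟨h1, h2⟩
      rw [mem_ball, dist_zero_right] at h1
      refine ⟨by rw [mem_ball, dist_zero_right, hnrm, div_lt_one hε]; exact h1, ?_⟩
      show ε⁻¹ * y N < 1 * d
      rw [one_mul]
      calc ε⁻¹ * y N < ε⁻¹ * (ε * d) := mul_lt_mul_of_pos_left h2 (inv_pos.2 hε)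
        _ = d := by field_simp
  have hsmul : D ε d = ε • D 1 d := by
    ext y
    rw [Set.mem_smul_set_iff_inv_smul_mem₀ hε.ne', hiff]
  have hvolD : volume (D ε d) = ENNReal.ofReal (ε ^ (m + 1)) * volume (D 1 d) := by
    rw [hsmul, Measure.addHaar_smul, finrank_euclideanSpace_fin,
      abs_of_pos (pow_pos hε (m + 1))]
  have hvol2 : vol2 d = (volume (D 1 d)).toReal := by
    have h1 : D 1 d
        = {y : EuclideanSpace ℝ (Fin (m + 1)) | y ∈ ball 0 1 ∧ y N < 1 * d} := rfl
    have h2 : {y : EuclideanSpace ℝ (Fin (m + 1)) | y ∈ ball 0 1 ∧ y N < 1 * d}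
        = {y : EuclideanSpace ℝ (Fin (m + 1)) | y ∈ ball 0 1 ∧ y N < d} := by
      simp only [one_mul]
    rw [h1, h2]
    rfl
  have hD1pos : 0 < volume (D 1 d) := by
    have hOopen : IsOpen (ball (0 : EuclideanSpace ℝ (Fin (m + 1))) 1
        ∩ (fun y : EuclideanSpace ℝ (Fin (m + 1)) => y N) ⁻¹' (Set.Iio (0 : ℝ))) :=
      isOpen_ball.inter (isOpen_Iio.preimage (contApp N))
    have hOne : (ball (0 : EuclideanSpace ℝ (Fin (m + 1))) 1
        ∩ (fun y : EuclideanSpace ℝ (Fin (m + 1)) => y N) ⁻¹' (Set.Iio (0 : ℝ))).Nonempty := by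
      refine ⟨(-(1 : ℝ)/2) • EuclideanSpace.single N (1 : ℝ), ?_, ?_⟩
      · rw [mem_ball, dist_zero_right, norm_smul, EuclideanSpace.norm_single]
        norm_num
      · show ((-(1 : ℝ)/2) • EuclideanSpace.single N (1 : ℝ)) N < 0
        have h3 : ((-(1 : ℝ)/2) • EuclideanSpace.single N (1 : ℝ)) N
            = (-(1 : ℝ)/2) * (EuclideanSpace.single N (1 : ℝ)) N := rfl
        rw [h3, EuclideanSpace.single_apply, if_pos rfl]
        norm_num
    refine (hOopen.measure_pos volume hOne).trans_le (measure_mono ?_)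
    rintro y ⟨hy1, hy2⟩
    exact ⟨hy1, lt_of_lt_of_le hy2 (by simpa using hd0)⟩
  have hD1fin : volume (D 1 d) ≠ ⊤ :=
    ((measure_mono (fun y (hy : y ∈ D 1 d) => ball_subset_closedBall hy.1)).trans_lt
      measure_closedBall_lt_top).ne
  have hvol2pos : 0 < vol2 d := by
    rw [hvol2]
    exact ENNReal.toReal_pos hD1pos.ne' hD1fin
  have hVtoReal : (volume (D ε d)).toReal = ε ^ (m + 1) * vol2 d := by
    rw [hvolD, ENNReal.toReal_mul, ENNReal.toReal_ofReal (by positivity), hvol2]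
  have hVpos : 0 < (volume (D ε d)).toReal := by
    rw [hVtoReal]; positivity
  have hsE : sE ε d = κ / (((m : ℝ) + 2) * vol2 d) * ε
      * (1 - d ^ 2) ^ (((m : ℝ) + 2) / 2) := by
    show κ / ((↑(m + 1) + 1) * vol2 d) * ε * (1 - d ^ 2) ^ ((↑(m + 1) + (1 : ℝ)) / 2) = _
    push_cast
    ring_nf
  have hsE0 : 0 ≤ sE ε d := by
    rw [hsE]
    exact mul_nonneg (mul_nonneg (div_nonneg hκ0
      (mul_nonneg (by positivity) hvol2pos.le)) hε.le) (Real.rpow_nonneg h1d _)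
  rcases eq_or_ne i j with rfl | hij
  · -- diagonal case
    rw [if_pos rfl]
    have hintD : IntegrableOn (fun y : EuclideanSpace ℝ (Fin (m + 1)) => y i ^ 2) (D ε d) :=
      integrableOn_ball ((contApp i).pow 2) hDsub
    have hintc : IntegrableOn (fun y : EuclideanSpace ℝ (Fin (m + 1)) => y i ^ 2) cap :=
      integrableOn_ball ((contApp i).pow 2) hcapsub
    set I := ∫ y in D ε d, y i ^ 2 with hIdef
    set J := ∫ y in cap, y i ^ 2 with hJdef
    set V := (volume (D ε d)).toReal with hVdef
    set c := (volume cap).toReal with hcdef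
    set B := (volume (ball (0 : EuclideanSpace ℝ (Fin (m + 1))) ε)).toReal with hBdef
    have hsplit : (∫ y in ball (0 : EuclideanSpace ℝ (Fin (m + 1))) ε, y i ^ 2) = I + J := by
      rw [← hunion]
      exact setIntegral_union hdisj hcapm hintD hintc
    have hmsq := msq ε hε i
    have hBVc : B = V + c := by
      rw [hBdef, hVdef, hcdef, ← ENNReal.toReal_add hDfin hcapfin,
        ← measure_union hdisj hcapm, hunion]
    have hc0 : 0 ≤ c := ENNReal.toReal_nonneg
    have hJb : |J| ≤ ε ^ 2 * c := by
      have hb : ∀ x ∈ cap, ‖x i ^ 2‖ ≤ ε ^ 2 := by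
        intro x hx
        have h1 : |x i| ≤ ‖x‖ := abs_coord_le_norm x i
        have h2 : ‖x‖ < ε := by
          have := hx.1
          rwa [mem_ball, dist_zero_right] at this
        rw [Real.norm_eq_abs, abs_of_nonneg (sq_nonneg _)]
        nlinarith [sq_abs (x i), abs_nonneg (x i), norm_nonneg x,
          sq_nonneg (‖x‖ - |x i|), sq_nonneg (ε - ‖x‖)]
      have := norm_setIntegral_le_of_norm_le_const (μ := volume) (s := cap)
        (lt_of_le_of_ne le_top hcapfin) hb
      rw [Real.norm_eq_abs] at this
      calc |J| ≤ ε ^ 2 * (volume cap).toReal := this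
        _ = ε ^ 2 * c := rfl
    have hcb : c ≤ κ * ε ^ (m + 1) * (1 - d ^ 2) ^ (((m : ℝ) + 2) / 2) := by
      have h := cap_volume m hm ε d hε hd0 hd1
      have h2 : volume cap ≤ ENNReal.ofReal (κ * ε ^ (m + 1)
          * (1 - d ^ 2) ^ (((m : ℝ) + 2) / 2)) := h
      calc c ≤ (ENNReal.ofReal (κ * ε ^ (m + 1)
            * (1 - d ^ 2) ^ (((m : ℝ) + 2) / 2))).toReal :=
          ENNReal.toReal_mono ENNReal.ofReal_ne_top h2
        _ = κ * ε ^ (m + 1) * (1 - d ^ 2) ^ (((m : ℝ) + 2) / 2) :=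
          ENNReal.toReal_ofReal (mul_nonneg (mul_nonneg hκ0 (by positivity))
            (Real.rpow_nonneg h1d _))
    have himport : ∫ y in D ε d, y i * y i = I := by
      rw [hIdef]
      exact setIntegral_congr_fun hDm fun y _ => (sq (y i)).symm
    have hε' : ε ≠ 0 := hε.ne'
    have hv' : vol2 d ≠ 0 := hvol2pos.ne'
    have hm2 : ((m : ℝ) + 2) ≠ 0 := by positivity
    have hnn1 : (1 : ℝ) ≤ (↑(m + 1) : ℝ) + 2 := by
      push_cast
      linarith [Nat.cast_nonneg (α := ℝ) m]
    have hI : I = B * ε ^ 2 / (↑(m + 1) + 2) - J := by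
      rw [← hBdef] at hmsq
      linarith [hsplit, hmsq]
    have hstep : V⁻¹ * I - ε ^ 2 / (↑(m + 1) + 2)
        = V⁻¹ * (I - V * (ε ^ 2 / (↑(m + 1) + 2))) := by
      field_simp
    have hIVt : I - V * (ε ^ 2 / (↑(m + 1) + 2))
        = c * (ε ^ 2 / (↑(m + 1) + 2)) - J := by
      rw [hI, hBVc]; ring
    have habs : |c * (ε ^ 2 / (↑(m + 1) + 2)) - J| ≤ 2 * ε ^ 2 * c := by
      have h4 : c * (ε ^ 2 / (↑(m + 1) + 2)) ≤ c * ε ^ 2 :=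
        mul_le_mul_of_nonneg_left (div_le_self (sq_nonneg ε) hnn1) hc0
      have h5 : 0 ≤ c * (ε ^ 2 / (↑(m + 1) + 2)) := by positivity
      calc |c * (ε ^ 2 / (↑(m + 1) + 2)) - J|
          ≤ |c * (ε ^ 2 / (↑(m + 1) + 2))| + |J| := abs_sub _ _
        _ ≤ c * ε ^ 2 + ε ^ 2 * c := add_le_add (by rwa [abs_of_nonneg h5]) hJb
        _ = 2 * ε ^ 2 * c := by ring
    rw [setAverage_eq, smul_eq_mul, himport]
    calc |V⁻¹ * I - ε ^ 2 / (↑(m + 1) + 2)|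
        = V⁻¹ * |c * (ε ^ 2 / (↑(m + 1) + 2)) - J| := by
          rw [hstep, abs_mul, abs_of_pos (inv_pos.2 hVpos), hIVt]
      _ ≤ V⁻¹ * (2 * ε ^ 2 * c) := mul_le_mul_of_nonneg_left habs (inv_nonneg.2 hVpos.le)
      _ ≤ V⁻¹ * (2 * ε ^ 2 * (κ * ε ^ (m + 1) * (1 - d ^ 2) ^ (((m : ℝ) + 2) / 2))) :=
          mul_le_mul_of_nonneg_left
            (mul_le_mul_of_nonneg_left hcb (by positivity)) (inv_nonneg.2 hVpos.le)
      _ = 2 * (↑m + 2) * ε * sE ε d := by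
          rw [hsE, hVtoReal]
          field_simp
  · -- off-diagonal case
    rw [if_neg hij]
    have h0 : ∫ y in D ε d, y i * y j = 0 := offdiag_zero ε (ε * d) N i j hij hDm
    rw [setAverage_eq, smul_eq_mul, h0, mul_zero, sub_zero, abs_zero]
    exact mul_nonneg (mul_nonneg (by positivity) hε.le) hsE0
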